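/- Let (Q_t)_{t≥0} be the transition semigroup of a measure-valued branching process on M(E) satisfying Condition 2.6. Then for each x ∈ E the mapping t ↦ V̄_t(x) is decreasing on (0,∞), and for every t > 0 and μ ∈ M(E), Q_t(μ, {0}) = e^{−μ(V̄_t)}, where {0} ⊂ M(E) is the singleton of the zero measure. -/

import Mathlib

open MeasureTheory Filter Set
open scoped ENNReal NNReal Topology

noncomputable section

namespace DW

section TV

variable {α : Type*} [MeasurableSpace α]

/-- The total variation measure `|μ - ν|` of the difference of two finite measures. -/
def tvMeasure (μ ν : Measure α) : Measure α := (μ - ν) + (ν - μ)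

/-- The total variation norm `‖μ - ν‖_var` of the difference of two finite measures. -/
def tvNorm (μ ν : Measure α) : ℝ := (tvMeasure μ ν Set.univ).toReal

/-- `P` is a coupling of the probability measures `Q1` and `Q2`. -/
def IsCoupling (P : Measure (α × α)) (Q1 Q2 : Measure α) : Prop :=
  IsProbabilityMeasure P ∧ P.map Prod.fst = Q1 ∧ P.map Prod.snd = Q2

/-- Convolution of two measures on an additive monoid. -/
def mconv [Add α] (P1 P2 : Measure α) : Measure α :=
  (P1.prod P2).map fun p => p.1 + p.2

end TV

/-- Supremum norm of a real valued function. -/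
def supNorm {β : Type*} (f : β → ℝ) : ℝ := ⨆ x, |f x|

section Defs

variable {E : Type*} [MeasurableSpace E]

/-- The pairing `μ(f) = ∫_E f dμ`. -/
def pair (μ : FiniteMeasure E) (f : E → ℝ) : ℝ := ∫ x, f x ∂(μ : Measure E)

/-- `f` belongs to `B(E)⁺`: bounded nonnegative Borel functions. -/
def BddBorelNN (f : E → ℝ) : Prop :=
  Measurable f ∧ (∃ C, ∀ x, f x ≤ C) ∧ ∀ x, 0 ≤ f x

/-- `f` belongs to `B(E)`: bounded Borel functions. -/
def BddBorel (f : E → ℝ) : Prop := Measurable f ∧ ∃ C, ∀ x, |f x| ≤ C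

/-- The Dirac measure `δ_x` as a finite measure. -/
def diracFM (x : E) : FiniteMeasure E := ⟨Measure.dirac x, inferInstance⟩

variable [MeasurableSpace (FiniteMeasure E)]

/-- The cumulant semigroup `V_t f(x) = -log ∫ e^{-ν(f)} Q_t(δ_x, dν)`. -/
def cumulant (Q : ℝ → FiniteMeasure E → Measure (FiniteMeasure E))
    (t : ℝ) (f : E → ℝ) (x : E) : ℝ :=
  - Real.log (∫ ν, Real.exp (-(pair ν f)) ∂(Q t (diracFM x)))

/-- The first-moment kernel `π_t f(x) = ∫ ν(f) Q_t(δ_x, dν)`. -/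
def momentKernel (Q : ℝ → FiniteMeasure E → Measure (FiniteMeasure E))
    (t : ℝ) (f : E → ℝ) (x : E) : ℝ :=
  ∫ ν, pair ν f ∂(Q t (diracFM x))

/-- `(Q_t)` is the transition semigroup of a measure-valued branching process. -/
structure IsMBSemigroup (Q : ℝ → FiniteMeasure E → Measure (FiniteMeasure E)) : Prop where
  meas : ∀ t, 0 ≤ t → ∀ s : Set (FiniteMeasure E), MeasurableSet s →
    Measurable fun μ => Q t μ s
  prob : ∀ t, 0 ≤ t → ∀ μ, IsProbabilityMeasure (Q t μ)
  init : ∀ μ, Q 0 μ = Measure.dirac μ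
  chapman : ∀ s, 0 ≤ s → ∀ t, 0 ≤ t → ∀ μ, (Q s μ).bind (Q t) = Q (s + t) μ
  branching : ∀ t, 0 ≤ t → ∀ μ f, BddBorelNN f →
    ∫ ν, Real.exp (-(pair ν f)) ∂(Q t μ) = Real.exp (-(pair μ (cumulant Q t f)))

/-- Condition 2.1: the first moments exist, are bounded kernels, and satisfy the
first-moment formula. -/
def Condition21 (Q : ℝ → FiniteMeasure E → Measure (FiniteMeasure E)) : Prop :=
  ∀ t, 0 ≤ t → ∀ f, BddBorelNN f →
    (∃ C, ∀ x, momentKernel Q t f x ≤ C) ∧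
    ∀ μ : FiniteMeasure E, ∫ ν, pair ν f ∂(Q t μ) = pair μ (momentKernel Q t f)

/-- Condition 2.6: for each `t > 0` the increasing limit
`V̄_t(x) = lim_{λ→∞} V_t(λ 1)(x)` exists and is bounded on `E`. -/
def Condition26 (Q : ℝ → FiniteMeasure E → Measure (FiniteMeasure E))
    (Vbar : ℝ → E → ℝ) : Prop :=
  ∀ t, 0 < t →
    (∀ x, Tendsto (fun lam : ℝ => cumulant Q t (fun _ => lam) x) atTop (𝓝 (Vbar t x))) ∧
    ∃ C, ∀ x, Vbar t x ≤ C

/-- The Wasserstein distance, relative to the total variation distance on `M(E)`,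
between two probability measures on `M(E)`. -/
def W1 (Q1 Q2 : Measure (FiniteMeasure E)) : ℝ :=
  sInf { r | ∃ P, IsCoupling P Q1 Q2 ∧
    r = ∫ p, tvNorm ((p.1 : FiniteMeasure E) : Measure E) ((p.2 : FiniteMeasure E) : Measure E) ∂P }

/-- The Lipschitz constant of `F : M(E) → ℝ` relative to the total variation distance. -/
def Lvar (F : FiniteMeasure E → ℝ) : ℝ :=
  sSup { r | ∃ μ ν : FiniteMeasure E, μ ≠ ν ∧
    r = |F μ - F ν| / tvNorm (μ : Measure E) (ν : Measure E) }

/-- `(N_t)` is a skew convolution semigroup associated with `(Q_t)`. -/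
def IsSCSemigroup (Q : ℝ → FiniteMeasure E → Measure (FiniteMeasure E))
    (N : ℝ → Measure (FiniteMeasure E)) : Prop :=
  (∀ t, 0 ≤ t → IsProbabilityMeasure (N t)) ∧
  ∀ r, 0 ≤ r → ∀ t, 0 ≤ t → N (r + t) = mconv ((N r).bind (Q t)) (N t)

/-- `(K_t)_{t>0}` is an entrance law of probability measures for `(Q_t)`. -/
def IsEntranceLaw (Q : ℝ → FiniteMeasure E → Measure (FiniteMeasure E))
    (K : ℝ → Measure (FiniteMeasure E)) : Prop :=
  (∀ r, 0 < r → IsProbabilityMeasure (K r)) ∧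
  ∀ r, 0 < r → ∀ t, 0 ≤ t → (K r).bind (Q t) = K (r + t)

/-- `I_s(K, f) = -log ∫ e^{-ν(f)} K_s(dν)`. -/
def IK (K : ℝ → Measure (FiniteMeasure E)) (s : ℝ) (f : E → ℝ) : ℝ :=
  - Real.log (∫ ν, Real.exp (-(pair ν f)) ∂(K s))

/-- The kernel `γ(x, dy) = η(x, dy) + ∫ ν_x(dy) H(x, dν)`. -/
def gammaKer (η : E → Measure E) (H : E → Measure (FiniteMeasure E)) (x : E) :
    Measure E :=
  η x + (H x).bind fun ν => ((ν : FiniteMeasure E) : Measure E).restrict {x}ᶜ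

/-- The branching mechanism
`φ(x,f) = b(x)f(x) + c(x)f(x)² - γ(x,f) + ∫ [e^{-ν(f)} - 1 + ν(f)] H(x,dν)`. -/
def phi (b c : E → ℝ) (η : E → Measure E) (H : E → Measure (FiniteMeasure E))
    (x : E) (f : E → ℝ) : ℝ :=
  b x * f x + c x * f x ^ 2 - (∫ y, f y ∂(gammaKer η H x)) +
    ∫ ν, (Real.exp (-(pair ν f)) - 1 + pair ν f) ∂(H x)

/-- The local projection `φ₁` of the branching mechanism `φ`. -/
def phi1 (b c : E → ℝ) (η : E → Measure E) (H : E → Measure (FiniteMeasure E))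
    (x : E) (z : ℝ) : ℝ :=
  (b x - (gammaKer η H x Set.univ).toReal) * z + c x * z ^ 2 +
    ∫ ν, (Real.exp (-(z * (((ν : FiniteMeasure E) : Measure E) {x}).toReal)) - 1 +
      z * (((ν : FiniteMeasure E) : Measure E) {x}).toReal) ∂(H x)

/-- A spatially independent branching mechanism
`φ_*(z) = b_* z + c_* z² + ∫ (e^{-zu} - 1 + zu) m_*(du)`. -/
def phiStar (bs cs : ℝ) (m : Measure ℝ) (z : ℝ) : ℝ :=
  bs * z + cs * z ^ 2 + ∫ u, (Real.exp (-(z * u)) - 1 + z * u) ∂m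

/-- The data `(b_*, c_*, m_*)` of a spatially independent branching mechanism. -/
def IsBranchingMechanismStar (bs cs : ℝ) (m : Measure ℝ) : Prop :=
  0 ≤ cs ∧ m {u | u ≤ 0} = 0 ∧ (∫⁻ u, ENNReal.ofReal (min u (u ^ 2)) ∂m) < ⊤

/-- Grey's condition for `φ_*`. -/
def GreyCondition (bs cs : ℝ) (m : Measure ℝ) : Prop :=
  ∃ z0 : ℝ, 0 < z0 ∧ (∀ z, z0 ≤ z → 0 < phiStar bs cs m z) ∧
    IntegrableOn (fun z => (phiStar bs cs m z)⁻¹) (Set.Ioi z0)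

/-- `v` is the cumulant semigroup of the CB-process with branching mechanism `φ_*`:
the unique nonnegative solution of `∂_t v_t(λ) = -φ_*(v_t(λ))`, `v_0(λ) = λ`. -/
def IsCBCumulant (bs cs : ℝ) (m : Measure ℝ) (v : ℝ → ℝ → ℝ) : Prop :=
  ∀ lam, 0 ≤ lam → v 0 lam = lam ∧
    ∀ t, 0 ≤ t → 0 ≤ v t lam ∧ HasDerivAt (fun s => v s lam) (-(phiStar bs cs m (v t lam))) t

/-- `(P_t)` is the transition semigroup of a Borel right process: a semigroup of
Markov probability kernels on `E`. -/
structure IsMarkovSemigroup (P : ℝ → E → Measure E) : Prop where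
  meas : ∀ t, 0 ≤ t → ∀ s : Set E, MeasurableSet s → Measurable fun x => P t x s
  prob : ∀ t, 0 ≤ t → ∀ x, IsProbabilityMeasure (P t x)
  init : ∀ x, P 0 x = Measure.dirac x
  chapman : ∀ s, 0 ≤ s → ∀ t, 0 ≤ t → ∀ x, (P s x).bind (P t) = P (s + t) x

/-- `π` is the first-moment semigroup of the `(ξ,φ)`-superprocess: the unique
locally bounded nonnegative solution of
`π_t f(x) = P_t f(x) + ∫_0^t P_{t-s}((γ - b) π_s f)(x) ds`. -/
def IsMomentSemigroup (P : ℝ → E → Measure E) (b : E → ℝ) (γ : E → Measure E)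
    (π : ℝ → (E → ℝ) → E → ℝ) : Prop :=
  (∀ t, 0 ≤ t → ∀ f, BddBorelNN f → ∀ x, 0 ≤ π t f x) ∧
  (∀ f, BddBorelNN f → ∀ T, 0 ≤ T → ∃ C, ∀ t ∈ Set.Icc (0 : ℝ) T, ∀ x, π t f x ≤ C) ∧
  ∀ f, BddBorelNN f → ∀ t, 0 ≤ t → ∀ x,
    π t f x = (∫ y, f y ∂(P t x)) +
      ∫ s in Set.Ioc (0 : ℝ) t, ∫ y, ((∫ z, π s f z ∂(γ y)) - b y * π s f y) ∂(P (t - s) x)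

/-- The data of a `(ξ,φ)`-superprocess: the underlying Markov semigroup `P`, the
branching mechanism parameters `b`, `c`, `η`, `H`, the cumulant semigroup `V`
(the unique locally bounded nonnegative solution of the evolution equation), and
the transition semigroup `Q` on `M(E)` determined by the Laplace functional. -/
structure Superprocess (P : ℝ → E → Measure E) (b c : E → ℝ)
    (η : E → Measure E) (H : E → Measure (FiniteMeasure E))
    (V : ℝ → (E → ℝ) → E → ℝ)
    (Q : ℝ → FiniteMeasure E → Measure (FiniteMeasure E)) : Prop where
  markov : IsMarkovSemigroup P
  hb : BddBorel b
  hc : BddBorel c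
  hcnn : ∀ x, 0 ≤ c x
  hηmeas : ∀ s : Set E, MeasurableSet s → Measurable fun x => η x s
  hηbdd : ∃ C : ℝ≥0, ∀ x, η x Set.univ ≤ (C : ℝ≥0∞)
  hHmeas : ∀ s : Set (FiniteMeasure E), MeasurableSet s → Measurable fun x => H x s
  hHzero : ∀ x, H x {0} = 0
  hHsf : ∀ x, SigmaFinite (H x)
  hHmom : ∃ C : ℝ≥0, ∀ x,
    (∫⁻ ν, (min (ν.mass : ℝ≥0∞) ((ν.mass : ℝ≥0∞) ^ 2) +
      ((ν : FiniteMeasure E) : Measure E) {x}ᶜ) ∂(H x)) ≤ (C : ℝ≥0∞)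
  hVnn : ∀ t, 0 ≤ t → ∀ f, BddBorelNN f → ∀ x, 0 ≤ V t f x
  hVbdd : ∀ f, BddBorelNN f → ∀ T, 0 ≤ T → ∃ C, ∀ t ∈ Set.Icc (0 : ℝ) T, ∀ x, V t f x ≤ C
  hVeq : ∀ f, BddBorelNN f → ∀ t, 0 ≤ t → ∀ x,
    V t f x = (∫ y, f y ∂(P t x)) -
      ∫ s in Set.Ioc (0 : ℝ) t, ∫ y, phi b c η H y (V s f) ∂(P (t - s) x)
  hQmeas : ∀ t, 0 ≤ t → ∀ s : Set (FiniteMeasure E), MeasurableSet s →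
    Measurable fun μ => Q t μ s
  hQprob : ∀ t, 0 ≤ t → ∀ μ, IsProbabilityMeasure (Q t μ)
  hQlaplace : ∀ t, 0 ≤ t → ∀ μ f, BddBorelNN f →
    ∫ ν, Real.exp (-(pair ν f)) ∂(Q t μ) = Real.exp (-(pair μ (V t f)))

end Defs

end DW

/-!
Putting `f ≡ λ` in the branching property and letting `λ → ∞`, dominated convergence gives
`Q_t(μ, {0}) = lim_λ exp(-μ(V_t λ))`, since `e^{-λ ν(1)} → 1_{ν = 0}`. Along `λ → ∞` the
functions `V_t λ` are nonnegative and increase to `V̄_t ≤ C`, so a second dominated convergence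
identifies the limit as `exp(-μ(V̄_t))`. For `μ = δ_x` this reads `Q_t(δ_x, {0}) = e^{-V̄_t(x)}`,
and `t ↦ Q_t(μ, {0})` increases because the zero measure is a trap: `Q_r(0, {0}) = 1`, hence
`Q_{s+r}(μ, {0}) = ∫ Q_r(η, {0}) Q_s(μ, dη) ≥ Q_s(μ, {0})`.
-/

namespace DW

section Pairing

variable {E : Type*} [MeasurableSpace E]

lemma bddBorelNN_const {c : ℝ} (hc : 0 ≤ c) : BddBorelNN (fun _ : E => c) :=
  ⟨measurable_const, ⟨c, fun _ => le_rfl⟩, fun _ => hc⟩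

lemma pair_diracFM {f : E → ℝ} (hf : Measurable f) (x : E) : pair (diracFM x) f = f x :=
  integral_dirac' f x hf.stronglyMeasurable

lemma pair_const (μ : FiniteMeasure E) (c : ℝ) : pair μ (fun _ => c) = μ.mass * c := by
  simp [pair, measureReal_def, ← FiniteMeasure.ennreal_mass]

lemma norm_exp_neg_mass_mul_le_one {lam : ℝ} (hlam : 0 ≤ lam) (ν : FiniteMeasure E) :
    ‖Real.exp (-(ν.mass * lam))‖ ≤ 1 := by
  rw [Real.norm_eq_abs, Real.abs_exp, Real.exp_le_one_iff, neg_nonpos]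
  positivity

end Pairing

section WeakTopology

variable {E : Type*} [TopologicalSpace E] [MeasurableSpace E] [OpensMeasurableSpace E]
  [MeasurableSpace (FiniteMeasure E)] [BorelSpace (FiniteMeasure E)]

lemma measurableSet_singleton_zero : MeasurableSet {(0 : FiniteMeasure E)} := by
  have h : {(0 : FiniteMeasure E)} = FiniteMeasure.mass ⁻¹' {0} := by
    ext ν
    simp [FiniteMeasure.mass_zero_iff]
  rw [h]
  exact FiniteMeasure.continuous_mass.measurable (measurableSet_singleton 0)

lemma measurable_exp_neg_mass_mul (lam : ℝ) :
    Measurable fun ν : FiniteMeasure E => Real.exp (-(ν.mass * lam)) := by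
  fun_prop

lemma measurable_diracFM : Measurable (diracFM : E → FiniteMeasure E) :=
  (ProbabilityMeasure.toFiniteMeasure_continuous.comp continuous_diracProba).measurable

variable (P : Measure (FiniteMeasure E)) [IsFiniteMeasure P]

lemma integrable_exp_neg_mass_mul {lam : ℝ} (hlam : 0 ≤ lam) :
    Integrable (fun ν : FiniteMeasure E => Real.exp (-(ν.mass * lam))) P :=
  .of_bound (measurable_exp_neg_mass_mul lam).aestronglyMeasurable 1
    (.of_forall (norm_exp_neg_mass_mul_le_one hlam))

lemma antitoneOn_integral_exp_neg_mass_mul :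
    AntitoneOn (fun lam : ℝ => ∫ ν, Real.exp (-(ν.mass * lam)) ∂P) (Ici 0) := by
  intro a ha b hb hab
  refine integral_mono (integrable_exp_neg_mass_mul P hb) (integrable_exp_neg_mass_mul P ha)
    fun ν => Real.exp_le_exp.mpr ?_
  have := mul_le_mul_of_nonneg_left hab ν.mass.coe_nonneg
  linarith

lemma tendsto_integral_exp_neg_mass_mul :
    Tendsto (fun lam : ℝ => ∫ ν, Real.exp (-(ν.mass * lam)) ∂P) atTop
      (𝓝 (P.real {0})) := by
  rw [← integral_indicator_one measurableSet_singleton_zero]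
  refine tendsto_integral_filter_of_dominated_convergence (fun _ => 1)
    (.of_forall fun lam => (measurable_exp_neg_mass_mul lam).aestronglyMeasurable) ?_
    (integrable_const 1) (.of_forall fun ν => ?_)
  · filter_upwards [eventually_ge_atTop 0] with lam hlam
    exact .of_forall (norm_exp_neg_mass_mul_le_one hlam)
  · rcases eq_or_ne ν 0 with rfl | hν
    · simp
    · have hm : 0 < (ν.mass : ℝ) := by
        simpa [pos_iff_ne_zero, FiniteMeasure.mass_zero_iff] using hν
      simpa [hν] using tendsto_id.const_mul_atTop hm

end WeakTopology

section Semigroup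

variable {E : Type*} [MeasurableSpace E] [MeasurableSpace (FiniteMeasure E)]
  {Q : ℝ → FiniteMeasure E → Measure (FiniteMeasure E)} {Vbar : ℝ → E → ℝ} {s t : ℝ}

namespace IsMBSemigroup

variable (hQ : IsMBSemigroup Q)
include hQ

lemma integral_exp_neg_mass_mul (ht : 0 ≤ t) (μ : FiniteMeasure E) {lam : ℝ}
    (hlam : 0 ≤ lam) :
    ∫ ν, Real.exp (-(ν.mass * lam)) ∂(Q t μ)
      = Real.exp (-(pair μ (cumulant Q t fun _ => lam))) := by
  simpa only [pair_const] using hQ.branching t ht μ _ (bddBorelNN_const hlam)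

variable [TopologicalSpace E] [OpensMeasurableSpace E] [BorelSpace (FiniteMeasure E)]

lemma tendsto_exp_neg_pair_cumulant_const (ht : 0 ≤ t) (μ : FiniteMeasure E) :
    Tendsto (fun lam => Real.exp (-(pair μ (cumulant Q t fun _ => lam)))) atTop
      (𝓝 ((Q t μ).real {0})) := by
  have := hQ.prob t ht μ
  refine (tendsto_integral_exp_neg_mass_mul (Q t μ)).congr' ?_
  filter_upwards [eventually_ge_atTop 0] with lam hlam
  exact hQ.integral_exp_neg_mass_mul ht μ hlam

lemma measurable_cumulant_const (ht : 0 ≤ t) (lam : ℝ) :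
    Measurable (cumulant Q t fun _ => lam) := by
  let κ : ProbabilityTheory.Kernel E (FiniteMeasure E) :=
    ⟨fun x => Q t (diracFM x),
      (Measure.measurable_of_measurable_coe _ (hQ.meas t ht)).comp measurable_diracFM⟩
  have h := (measurable_exp_neg_mass_mul lam).stronglyMeasurable.integral_kernel (κ := κ)
  unfold cumulant
  simp only [pair_const]
  exact (Real.measurable_log.comp h.measurable).neg

lemma exp_neg_cumulant_const (ht : 0 ≤ t) {lam : ℝ} (hlam : 0 ≤ lam) (x : E) :
    Real.exp (-(cumulant Q t (fun _ => lam) x))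
      = ∫ ν, Real.exp (-(ν.mass * lam)) ∂(Q t (diracFM x)) := by
  rw [hQ.integral_exp_neg_mass_mul ht _ hlam, pair_diracFM (hQ.measurable_cumulant_const ht lam)]

lemma monotoneOn_cumulant_const (ht : 0 ≤ t) (x : E) :
    MonotoneOn (fun lam => cumulant Q t (fun _ => lam) x) (Ici 0) := by
  have := hQ.prob t ht (diracFM x)
  intro a ha b hb hab
  have h := antitoneOn_integral_exp_neg_mass_mul (Q t (diracFM x)) ha hb hab
  dsimp only at h ⊢
  rwa [← hQ.exp_neg_cumulant_const ht ha, ← hQ.exp_neg_cumulant_const ht hb, Real.exp_le_exp,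
    neg_le_neg_iff] at h

lemma cumulant_const_nonneg (ht : 0 ≤ t) {lam : ℝ} (hlam : 0 ≤ lam) (x : E) :
    0 ≤ cumulant Q t (fun _ => lam) x := by
  have := hQ.prob t ht (diracFM x)
  have h0 : cumulant Q t (fun _ => 0) x = 0 := by simp [cumulant, pair_const]
  exact h0 ▸ hQ.monotoneOn_cumulant_const ht x self_mem_Ici hlam hlam

lemma cumulant_const_le_Vbar (h26 : Condition26 Q Vbar) (ht : 0 < t) {lam : ℝ} (hlam : 0 ≤ lam)
    (x : E) : cumulant Q t (fun _ => lam) x ≤ Vbar t x := by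
  refine ge_of_tendsto ((h26 t ht).1 x) ?_
  filter_upwards [eventually_ge_atTop lam] with l hl
  exact hQ.monotoneOn_cumulant_const ht.le x hlam (hlam.trans hl) hl

lemma exp_neg_Vbar (h26 : Condition26 Q Vbar) (ht : 0 < t) (x : E) :
    Real.exp (-(Vbar t x)) = (Q t (diracFM x)).real {0} := by
  refine tendsto_nhds_unique ?_ (hQ.tendsto_exp_neg_pair_cumulant_const ht.le (diracFM x))
  simp_rw [pair_diracFM (hQ.measurable_cumulant_const ht.le _)]
  exact ((h26 t ht).1 x).neg.rexp

lemma apply_zero_singleton_zero (ht : 0 ≤ t) : Q t 0 {0} = 1 := by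
  have := hQ.prob t ht 0
  have h := hQ.tendsto_exp_neg_pair_cumulant_const ht 0
  simp only [pair, FiniteMeasure.toMeasure_zero, integral_zero_measure, neg_zero,
    Real.exp_zero] at h
  exact (ENNReal.toReal_eq_one_iff _).mp (tendsto_nhds_unique tendsto_const_nhds h).symm

lemma measure_singleton_zero_mono (hs : 0 ≤ s) (hst : s ≤ t) (μ : FiniteMeasure E) :
    Q s μ {0} ≤ Q t μ {0} := by
  obtain ⟨r, hr, rfl⟩ : ∃ r, 0 ≤ r ∧ t = s + r := ⟨t - s, by linarith, by ring⟩
  have hQr : Measurable (Q r) :=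
    Measure.measurable_of_measurable_coe _ (hQ.meas r hr)
  rw [← hQ.chapman s hs r hr μ, Measure.bind_apply measurableSet_singleton_zero
    hQr.aemeasurable, ← lintegral_indicator_one measurableSet_singleton_zero]
  refine lintegral_mono fun η => ?_
  rcases eq_or_ne η 0 with rfl | hη
  · simp [hQ.apply_zero_singleton_zero hr]
  · simp [hη]

lemma antitoneOn_Vbar (h26 : Condition26 Q Vbar) (x : E) :
    AntitoneOn (fun t => Vbar t x) (Ioi 0) := by
  intro s hs t ht hst
  have := hQ.prob t ht.le (diracFM x)
  have h : Real.exp (-(Vbar s x)) ≤ Real.exp (-(Vbar t x)) := by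
    rw [hQ.exp_neg_Vbar h26 hs, hQ.exp_neg_Vbar h26 ht]
    exact ENNReal.toReal_mono (measure_ne_top _ _) (hQ.measure_singleton_zero_mono hs.le hst _)
  rwa [Real.exp_le_exp, neg_le_neg_iff] at h

lemma tendsto_pair_cumulant_const (h26 : Condition26 Q Vbar) (ht : 0 < t) (μ : FiniteMeasure E) :
    Tendsto (fun lam => pair μ (cumulant Q t fun _ => lam)) atTop (𝓝 (pair μ (Vbar t))) := by
  obtain ⟨C, hC⟩ := (h26 t ht).2
  refine tendsto_integral_filter_of_dominated_convergence (fun _ => C)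
    (.of_forall fun lam => (hQ.measurable_cumulant_const ht.le lam).aestronglyMeasurable) ?_
    (integrable_const C) (.of_forall fun x => (h26 t ht).1 x)
  filter_upwards [eventually_ge_atTop 0] with lam hlam
  refine .of_forall fun x => ?_
  rw [Real.norm_of_nonneg (hQ.cumulant_const_nonneg ht.le hlam x)]
  exact (hQ.cumulant_const_le_Vbar h26 ht hlam x).trans (hC x)

lemma measureReal_singleton_zero (h26 : Condition26 Q Vbar) (ht : 0 < t) (μ : FiniteMeasure E) :
    (Q t μ).real {0} = Real.exp (-(pair μ (Vbar t))) :=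
  tendsto_nhds_unique (hQ.tendsto_exp_neg_pair_cumulant_const ht.le μ)
    (hQ.tendsto_pair_cumulant_const h26 ht μ).neg.rexp

end IsMBSemigroup

end Semigroup

theorem extinction_probability_MB_general
    {E : Type*} [TopologicalSpace E] [MeasurableSpace E] [BorelSpace E]
    [MeasurableSpace (FiniteMeasure E)] [BorelSpace (FiniteMeasure E)]
    (Q : ℝ → FiniteMeasure E → Measure (FiniteMeasure E))
    (hQ : IsMBSemigroup Q) (Vbar : ℝ → E → ℝ) (h26 : Condition26 Q Vbar) :
    (∀ x : E, ∀ s t : ℝ, 0 < s → s ≤ t → Vbar t x ≤ Vbar s x) ∧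
    ∀ t, 0 < t → ∀ μ : FiniteMeasure E,
      Q t μ {(0 : FiniteMeasure E)}
        = ENNReal.ofReal (Real.exp (-(pair μ (Vbar t)))) := by
  refine ⟨fun x s t hs hst => hQ.antitoneOn_Vbar h26 x hs (hs.trans_le hst) hst,
    fun t ht μ => ?_⟩
  have := hQ.prob t ht.le μ
  rw [← hQ.measureReal_singleton_zero h26 ht μ, ofReal_measureReal]

/-- Proposition 2.7: under Condition 2.6, `t ↦ V̄_t(x)` is
decreasing on `(0,∞)` and `Q_t(μ, {0}) = e^{-μ(V̄_t)}`. -/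
theorem extinction_probability_MB
    {E : Type*} [TopologicalSpace E] [MeasurableSpace E] [BorelSpace E]
    [StandardBorelSpace E]
    [MeasurableSpace (FiniteMeasure E)] [BorelSpace (FiniteMeasure E)]
    (Q : ℝ → FiniteMeasure E → Measure (FiniteMeasure E))
    (hQ : IsMBSemigroup Q) (Vbar : ℝ → E → ℝ) (h26 : Condition26 Q Vbar) :
    (∀ x : E, ∀ s t : ℝ, 0 < s → s ≤ t → Vbar t x ≤ Vbar s x) ∧
    ∀ t, 0 < t → ∀ μ : FiniteMeasure E,
      Q t μ {(0 : FiniteMeasure E)}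
        = ENNReal.ofReal (Real.exp (-(pair μ (Vbar t)))) :=
  extinction_probability_MB_general Q hQ Vbar h26

end DW
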